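/- arXiv:1302.0176 — 4 statements merged into one kernel-verified Lean document; each statement's English description precedes it below -/
import Mathlib

section
/- For every ξ = (ξ₁, ξ₂) ∈ ℝ² and every k ∈ ℤ, the matrix A(ξ,k) is Hermitian, and its characteristic polynomial equals X⁴ − (1 + |ξ|² + k²)·X² + k². -/
/-- The 4×4 Fourier symbol of the acoustic–Rossby wave operator. -/
noncomputable def acousticSymbol (ξ₁ ξ₂ : ℝ) (k : ℤ) : Matrix (Fin 4) (Fin 4) ℂ :=
  !![0, (ξ₁ : ℂ), (ξ₂ : ℂ), (k : ℂ);
     (ξ₁ : ℂ), 0, Complex.I, 0;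
     (ξ₂ : ℂ), -Complex.I, 0, 0;
     (k : ℂ), 0, 0, 0]

/-!
Cofactor expansion gives the characteristic polynomial of any matrix with the sparsity pattern
of `acousticSymbol`, with the Coriolis entries `z`, `w` in place of `i`, `-i`. For the symbol,
`z * w = 1` and `z + w = 0`, so the odd term vanishes and the constant term is `k²`.
-/

open Polynomial

theorem Matrix.charpoly_bordered_fin_four {R : Type*} [CommRing R] (a b c z w : R) :
    (!![0, a, b, c; a, 0, z, 0; b, w, 0, 0; c, 0, 0, 0] : Matrix (Fin 4) (Fin 4) R).charpoly =
      X ^ 4 - C (a ^ 2 + b ^ 2 + c ^ 2 + z * w) * X ^ 2 - C (a * b * (z + w)) * X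
        + C (c ^ 2 * (z * w)) := by
  have hcharmatrix :
      (!![0, a, b, c; a, 0, z, 0; b, w, 0, 0; c, 0, 0, 0] : Matrix (Fin 4) (Fin 4) R).charmatrix =
        !![X, -C a, -C b, -C c; -C a, X, -C z, 0; -C b, -C w, X, 0; -C c, 0, 0, X] := by
    ext i j
    fin_cases i <;> fin_cases j <;> simp
  rw [Matrix.charpoly, hcharmatrix, Matrix.det_succ_row_zero]
  simp [Fin.sum_univ_succ, Matrix.det_fin_three, Fin.succAbove]
  ring_nf

theorem acousticSymbol_isHermitian (ξ₁ ξ₂ : ℝ) (k : ℤ) :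
    (acousticSymbol ξ₁ ξ₂ k).IsHermitian := by
  rw [Matrix.IsHermitian.ext_iff]
  intro i j
  fin_cases i <;> fin_cases j <;> simp [acousticSymbol]

open Polynomial in
/-- For every `ξ = (ξ₁, ξ₂) ∈ ℝ²` and every `k ∈ ℤ`, the matrix `A(ξ,k)` is Hermitian and
its characteristic polynomial equals `X⁴ − (1 + |ξ|² + k²)·X² + k²`. -/
theorem acousticSymbol_isHermitian_and_charpoly (ξ₁ ξ₂ : ℝ) (k : ℤ) :
    (acousticSymbol ξ₁ ξ₂ k).IsHermitian ∧
    (acousticSymbol ξ₁ ξ₂ k).charpoly =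
      X ^ 4 - C (((1 + (ξ₁ ^ 2 + ξ₂ ^ 2) + (k : ℝ) ^ 2 : ℝ)) : ℂ) * X ^ 2
        + C (((k : ℝ) ^ 2 : ℝ) : ℂ) := by
  refine ⟨acousticSymbol_isHermitian ξ₁ ξ₂ k, ?_⟩
  have hI : Complex.I * -Complex.I = 1 := by simp
  rw [acousticSymbol, Matrix.charpoly_bordered_fin_four]
  simp only [hI, add_neg_cancel, mul_zero, map_zero, zero_mul, sub_zero, mul_one]
  push_cast
  ring_nf
end

section
/- For every fixed k ∈ ℤ with k ≠ 0, the function s ↦ λ₃(s,k) is strictly decreasing on the interval [0, ∞). -/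
/-- `a(s,k) = 1 + s² + k²`. -/
noncomputable def aFun (s : ℝ) (k : ℤ) : ℝ := 1 + s ^ 2 + (k : ℝ) ^ 2

/-- `λ₁(s,k) = √((a(s,k) + √(a(s,k)² − 4k²))/2)`. -/
noncomputable def lam1 (s : ℝ) (k : ℤ) : ℝ :=
  Real.sqrt ((aFun s k + Real.sqrt (aFun s k ^ 2 - 4 * (k : ℝ) ^ 2)) / 2)

/-- `λ₃(s,k) = √((a(s,k) − √(a(s,k)² − 4k²))/2)`. -/
noncomputable def lam3 (s : ℝ) (k : ℤ) : ℝ :=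
  Real.sqrt ((aFun s k - Real.sqrt (aFun s k ^ 2 - 4 * (k : ℝ) ^ 2)) / 2)

/-!
Rationalising, `λ₃² = (a − √(a² − 4k²))/2 = 2k² / (a + √(a² − 4k²))`. For `k ≠ 0` the numerator is
positive and the denominator is strictly increasing in `a`, which is itself strictly increasing in
`s ≥ 0`.
-/

open Set

namespace Real

variable {c x : ℝ}

theorem sub_sqrt_sq_sub_eq_div (hc : 0 < c) (hx : √c ≤ x) :
    x - √(x ^ 2 - c) = c / (x + √(x ^ 2 - c)) := by
  have hx0 : 0 < x := (sqrt_pos.mpr hc).trans_le hx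
  have hcx : c ≤ x ^ 2 := (sqrt_le_left hx0.le).mp hx
  have hden : 0 < x + √(x ^ 2 - c) := by positivity
  rw [eq_div_iff hden.ne']
  linear_combination -sq_sqrt (sub_nonneg.mpr hcx)

theorem sub_sqrt_sq_sub_pos (hc : 0 < c) (hx : √c ≤ x) : 0 < x - √(x ^ 2 - c) := by
  have hx0 : 0 < x := (sqrt_pos.mpr hc).trans_le hx
  rw [sub_sqrt_sq_sub_eq_div hc hx]
  positivity

theorem sub_sqrt_sq_sub_strictAntiOn (hc : 0 < c) :
    StrictAntiOn (fun x => x - √(x ^ 2 - c)) (Ici √c) := by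
  intro x hx y hy hxy
  have hx0 : 0 < x := (sqrt_pos.mpr hc).trans_le hx
  simp only [sub_sqrt_sq_sub_eq_div hc hx, sub_sqrt_sq_sub_eq_div hc hy]
  apply div_lt_div_of_pos_left hc (by positivity)
  exact add_lt_add_of_lt_of_le hxy (sqrt_le_sqrt (by gcongr))

end Real

theorem aFun_sq_sub_four_mul_sq (s : ℝ) (k : ℤ) :
    aFun s k ^ 2 - 4 * (k : ℝ) ^ 2 = (s ^ 2 + ((k : ℝ) - 1) ^ 2) * (s ^ 2 + ((k : ℝ) + 1) ^ 2) := by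
  unfold aFun
  ring

theorem sqrt_four_mul_sq_le_aFun (s : ℝ) (k : ℤ) : √(4 * (k : ℝ) ^ 2) ≤ aFun s k := by
  refine (Real.sqrt_le_left (by unfold aFun; positivity)).mpr (sub_nonneg.mp ?_)
  rw [aFun_sq_sub_four_mul_sq]
  positivity

theorem aFun_strictMonoOn (k : ℤ) : StrictMonoOn (fun s => aFun s k) (Ici 0) := by
  intro s hs t _ hst
  have : s ^ 2 < t ^ 2 := pow_lt_pow_left₀ hst hs two_ne_zero
  simp only [aFun]
  linarith

/-- For every fixed `k ∈ ℤ` with `k ≠ 0`, the function `s ↦ λ₃(s,k)` is strictly decreasing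
on `[0, ∞)`. -/
theorem lam3_strictAntiOn (k : ℤ) (hk : k ≠ 0) :
    StrictAntiOn (fun s => lam3 s k) (Set.Ici (0 : ℝ)) := by
  intro s hs t ht hst
  have hk2 : 0 < 4 * (k : ℝ) ^ 2 := by positivity
  have hdecr := Real.sub_sqrt_sq_sub_strictAntiOn hk2 (sqrt_four_mul_sq_le_aFun s k)
    (sqrt_four_mul_sq_le_aFun t k) (aFun_strictMonoOn k hs ht hst)
  have hpos := Real.sub_sqrt_sq_sub_pos hk2 (sqrt_four_mul_sq_le_aFun t k)
  exact Real.sqrt_lt_sqrt (by positivity) (div_lt_div_of_pos_right hdecr two_pos)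
end

section
/- Let ε > 0, let s : ℝ × ℝ³ → ℝ and V : ℝ × ℝ³ → ℝ³ be continuously differentiable, and suppose there is a compact set K ⊂ ℝ³ such that for every time t the supports of s(t,·) and V(t,·) are contained in K. If ε ∂ₜs + div_x V = 0 and ε ∂ₜV + ω × V + ∇_x s = 0 hold everywhere, where ω = (0,0,1), then the energy E(t) = ∫_{ℝ³} ( s(t,x)² + |V(t,x)|² ) dx is constant in t. -/
/-!
Multiplying the mass equation by `2s` and the momentum equations by `2Vᵢ` and adding, the
Coriolis term drops out because `ω × V ⊥ V`, leaving the local balance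
`ε ∂ₜ(s² + |V|²) = -2 div(s V)`. Compact support lets us differentiate the energy under the
integral sign, and the integral of a compactly supported divergence vanishes, so `E' = 0`.
-/

open MeasureTheory

/-- The `i`-th spatial partial derivative of a scalar function on `ℝ³`. -/
noncomputable def pd3 (i : Fin 3) (f : (Fin 3 → ℝ) → ℝ) (x : Fin 3 → ℝ) : ℝ :=
  fderiv ℝ f x (Pi.single i 1)

open Set Function

section Integral

variable {E G : Type*} [NormedAddCommGroup E] [NormedSpace ℝ E]
  [NormedAddCommGroup G] [NormedSpace ℝ G]

theorem integral_fderiv_apply_eq_zero [FiniteDimensional ℝ E] [MeasurableSpace E]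
    [BorelSpace E] {μ : Measure E} [μ.IsAddHaarMeasure] {g : E → ℝ} (hg : ContDiff ℝ 1 g)
    (hgc : HasCompactSupport g) (v : E) :
    ∫ x, fderiv ℝ g x v ∂μ = 0 := by
  have hg' : Continuous fun x => fderiv ℝ g x v :=
    (hg.continuous_fderiv one_ne_zero).clm_apply continuous_const
  -- integration by parts against the constant function `1`
  simpa using integral_mul_fderiv_eq_neg_fderiv_mul_of_integrable (μ := μ)
    (f := fun _ => (1 : ℝ)) (g := g) (v := v) (by simp)
    (by simpa using hg'.integrable_of_hasCompactSupport (hgc.fderiv_apply (𝕜 := ℝ) v))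
    (by simpa using hg.continuous.integrable_of_hasCompactSupport hgc)
    (fun x _ => differentiableAt_const 1) (fun x _ => hg.differentiable one_ne_zero x)

theorem DifferentiableAt.hasDerivAt_comp_prodMk_left {F : ℝ × E → G} {t : ℝ} {x : E}
    (h : DifferentiableAt ℝ F (t, x)) :
    HasDerivAt (fun τ => F (τ, x)) (fderiv ℝ F (t, x) (1, 0)) t :=
  h.hasFDerivAt.comp_hasDerivAt t ((hasDerivAt_id t).prodMk (hasDerivAt_const t x))

theorem hasDerivAt_integral_of_contDiff_of_support_subset [FiniteDimensional ℝ E]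
    [MeasurableSpace E] [BorelSpace E] [CompleteSpace G] {μ : Measure E}
    [IsFiniteMeasureOnCompacts μ] {F : ℝ × E → G}
    (hF : ContDiff ℝ 1 F) {K : Set E} (hK : IsCompact K)
    (hsupp : ∀ t, support (fun x => F (t, x)) ⊆ K) (t₀ : ℝ) :
    HasDerivAt (fun t => ∫ x, F (t, x) ∂μ) (∫ x, deriv (fun τ => F (τ, x)) t₀ ∂μ) t₀ := by
  have hF' (t : ℝ) (x : E) := (hF.differentiable one_ne_zero (t, x)).hasDerivAt_comp_prodMk_left
  have hF'cont : Continuous fun p : ℝ × E => fderiv ℝ F p (1, 0) :=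
    (hF.continuous_fderiv one_ne_zero).clm_apply continuous_const
  have hslice (t : ℝ) : Continuous fun x => F (t, x) := hF.continuous.comp (by fun_prop)
  have hF'_zero (t : ℝ) (x : E) (hx : x ∉ K) : fderiv ℝ F (t, x) (1, 0) = 0 := by
    have hzero : (fun τ => F (τ, x)) = fun _ => 0 := funext fun τ => notMem_support.mp
      fun h => hx (hsupp τ h)
    simpa [hzero] using (hF' t x).deriv.symm
  obtain ⟨C, hC⟩ := (isCompact_Icc.prod hK).exists_bound_of_continuousOn
    (s := Icc (t₀ - 1) (t₀ + 1) ×ˢ K) hF'cont.continuousOn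
  have hbound : ∀ x, ∀ t ∈ Icc (t₀ - 1) (t₀ + 1),
      ‖fderiv ℝ F (t, x) (1, 0)‖ ≤ K.indicator (fun _ => C) x := by
    intro x t ht
    by_cases hx : x ∈ K
    · simpa [hx] using hC (t, x) ⟨ht, hx⟩
    · simp [hx, hF'_zero t x hx]
  have key := hasDerivAt_integral_of_dominated_loc_of_deriv_le (μ := μ)
    (Icc_mem_nhds (by linarith) (by linarith))
    (.of_forall fun t => (hslice t).aestronglyMeasurable)
    ((hslice t₀).integrable_of_hasCompactSupport (HasCompactSupport.intro hK
      fun x hx => notMem_support.mp fun h => hx (hsupp t₀ h)))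
    (hF'cont.comp (by fun_prop : Continuous fun x : E => (t₀, x))).aestronglyMeasurable
    (.of_forall hbound)
    ((integrableOn_const hK.measure_lt_top.ne).integrable_indicator hK.measurableSet)
    (.of_forall fun x t _ => hF' t x)
  simpa only [fun x => (hF' t₀ x).deriv] using key.2

end Integral

theorem pd3_mul {f g : (Fin 3 → ℝ) → ℝ} {x : Fin 3 → ℝ} (hf : DifferentiableAt ℝ f x)
    (hg : DifferentiableAt ℝ g x) (i : Fin 3) :
    pd3 i (fun y => f y * g y) x = f x * pd3 i g x + g x * pd3 i f x := by
  simp [pd3, fderiv_fun_mul hf hg]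

theorem integral_sum_pd3_eq_zero {f : Fin 3 → (Fin 3 → ℝ) → ℝ} (hf : ∀ i, ContDiff ℝ 1 (f i))
    (hfc : ∀ i, HasCompactSupport (f i)) :
    ∫ x, ∑ i, pd3 i (f i) x = 0 := by
  unfold pd3
  rw [integral_finsetSum _ fun i _ => ((hf i).continuous_fderiv one_ne_zero).clm_apply
    continuous_const |>.integrable_of_hasCompactSupport ((hfc i).fderiv_apply (𝕜 := ℝ) _)]
  exact Finset.sum_eq_zero fun i _ => integral_fderiv_apply_eq_zero (hf i) (hfc i) _

theorem acoustic_rossby_energy_density_deriv {ε : ℝ} {s : ℝ × (Fin 3 → ℝ) → ℝ}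
    {V : ℝ × (Fin 3 → ℝ) → Fin 3 → ℝ} (hs : Differentiable ℝ s) (hV : Differentiable ℝ V)
    {t : ℝ} {x : Fin 3 → ℝ}
    (hmass : ε * deriv (fun τ => s (τ, x)) t + ∑ i, pd3 i (fun y => V (t, y) i) x = 0)
    (hmom : ∀ i : Fin 3, ε * deriv (fun τ => V (τ, x) i) t + ![-(V (t, x) 1), V (t, x) 0, 0] i
        + pd3 i (fun y => s (t, y)) x = 0) :
    ε * deriv (fun τ => s (τ, x) ^ 2 + ∑ i, V (τ, x) i ^ 2) t
      = -2 * ∑ i, pd3 i (fun y => s (t, y) * V (t, y) i) x := by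
  have hVi (i : Fin 3) : Differentiable ℝ fun p => V p i := by fun_prop
  have hslice {g : ℝ × (Fin 3 → ℝ) → ℝ} (hg : Differentiable ℝ g) :
      Differentiable ℝ fun y => g (t, y) := hg.comp (by fun_prop)
  have htime {g : ℝ × (Fin 3 → ℝ) → ℝ} (hg : Differentiable ℝ g) :
      HasDerivAt (fun τ => g (τ, x)) (deriv (fun τ => g (τ, x)) t) t :=
    (hg.comp (by fun_prop : Differentiable ℝ fun τ : ℝ => (τ, x)) t).hasDerivAt
  have hrotation : ∑ i, V (t, x) i * ![-(V (t, x) 1), V (t, x) 0, 0] i = 0 := by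
    simp [Fin.sum_univ_three]
    ring
  rw [((htime hs).fun_pow 2 |>.fun_add
    (HasDerivAt.fun_sum fun i _ => (htime (hVi i)).fun_pow 2)).deriv]
  simp only [pd3_mul (hslice hs x) (hslice (hVi _) x)]
  simp only [Fin.sum_univ_three] at hmass hrotation ⊢
  linear_combination 2 * s (t, x) * hmass + 2 * V (t, x) 0 * hmom 0
    + 2 * V (t, x) 1 * hmom 1 + 2 * V (t, x) 2 * hmom 2 - 2 * hrotation

/-- Energy conservation for the acoustic–Rossby wave system
`ε ∂ₜs + div V = 0`, `ε ∂ₜV + ω × V + ∇s = 0` with `ω = (0,0,1)`: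
for compactly supported `C¹` solutions, the energy
`E(t) = ∫ (s(t,x)² + |V(t,x)|²) dx` is constant in `t`. -/
theorem acoustic_rossby_energy_conservation
    (ε : ℝ) (hε : 0 < ε)
    (s : ℝ × (Fin 3 → ℝ) → ℝ) (V : ℝ × (Fin 3 → ℝ) → Fin 3 → ℝ)
    (hs : ContDiff ℝ 1 s) (hV : ContDiff ℝ 1 V)
    (hsupp : ∃ K : Set (Fin 3 → ℝ), IsCompact K ∧ ∀ t : ℝ,
      Function.support (fun x => s (t, x)) ⊆ K ∧
      Function.support (fun x => V (t, x)) ⊆ K)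
    (hmass : ∀ t : ℝ, ∀ x : Fin 3 → ℝ,
      ε * deriv (fun τ => s (τ, x)) t + ∑ i, pd3 i (fun y => V (t, y) i) x = 0)
    (hmom : ∀ t : ℝ, ∀ x : Fin 3 → ℝ, ∀ i : Fin 3,
      ε * deriv (fun τ => V (τ, x) i) t
        + ![-(V (t, x) 1), V (t, x) 0, 0] i
        + pd3 i (fun y => s (t, y)) x = 0) :
    ∀ t₁ t₂ : ℝ,
      (∫ x, (s (t₁, x) ^ 2 + ∑ i, (V (t₁, x) i) ^ 2)) =
      (∫ x, (s (t₂, x) ^ 2 + ∑ i, (V (t₂, x) i) ^ 2)) := by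
  obtain ⟨K, hK, hKsupp⟩ := hsupp
  have hs0 (t : ℝ) (x : Fin 3 → ℝ) (hx : x ∉ K) : s (t, x) = 0 :=
    notMem_support.mp fun h => hx ((hKsupp t).1 h)
  have hV0 (t : ℝ) (x : Fin 3 → ℝ) (hx : x ∉ K) : V (t, x) = 0 :=
    notMem_support.mp fun h => hx ((hKsupp t).2 h)
  have hdensity : ContDiff ℝ 1 fun p => s p ^ 2 + ∑ i, V p i ^ 2 := by fun_prop
  have hflux_zero (t : ℝ) : ∫ x, ∑ i, pd3 i (fun y => s (t, y) * V (t, y) i) x = 0 :=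
    integral_sum_pd3_eq_zero (fun i => by fun_prop)
      fun i => HasCompactSupport.intro hK fun x hx => by simp [hs0 t x hx]
  have henergy (t : ℝ) := hasDerivAt_integral_of_contDiff_of_support_subset (μ := volume)
    hdensity hK (fun t x hx => by_contra fun hxK => hx (by simp [hs0 t x hxK, hV0 t x hxK])) t
  have hderiv_zero (t : ℝ) :
      ∫ x, deriv (fun τ => s (τ, x) ^ 2 + ∑ i, V (τ, x) i ^ 2) t = 0 := by
    have hbalance (x : Fin 3 → ℝ) := acoustic_rossby_energy_density_deriv
      (hs.differentiable one_ne_zero) (hV.differentiable one_ne_zero) (hmass t x) (hmom t x)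
    simp_rw [(eq_inv_mul_iff_mul_eq₀ hε.ne').mpr (hbalance _), integral_const_mul, hflux_zero,
      mul_zero]
  exact is_const_of_deriv_eq_zero (fun t => (henergy t).differentiableAt)
    fun t => (henergy t).deriv.trans (hderiv_zero t)
end

section
/- Let γ > 1 and let p : (0,∞) → ℝ be continuously differentiable with p′(ρ) > 0 for all ρ > 0 and lim_{ρ→∞} p′(ρ)/ρ^{γ−1} = p_∞ for some p_∞ > 0, and let H(ρ) = ρ ∫₁^ρ p(z)/z² dz. Then there exist constants c > 0 and R > 1 such that for every ρ ≥ R: H(ρ) − H′(1)(ρ − 1) − H(1) ≥ c ρ^γ. -/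
/-! Since `H(1) = 0` and `H′(1) = p(1)`, the integrand equals `ρ ∫₁^ρ (p(z) − p(1))/z² dz`.
As `p` is increasing, the part of the integral over `[ρ/2, ρ]` alone gives the lower bound
`(p(ρ/2) − p(1))/2`, and `p(ρ/2) − p(1) ≥ p(ρ/2) − p(ρ/4) ≥ (p∞/2)(ρ/4)^γ` by the mean value
theorem, once `ρ/4` is past the point beyond which `p′(z) ≥ (p∞/2) z^{γ−1}`. -/

open Filter

/-- The pressure potential `H(ρ) = ρ ∫₁^ρ p(z)/z² dz`. -/
noncomputable def Hpot (p : ℝ → ℝ) (ρ : ℝ) : ℝ :=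
  ρ * ∫ z in (1 : ℝ)..ρ, p z / z ^ 2

open Set Real

lemma integral_div_sq {ρ : ℝ} (hρ : 0 < ρ) (c : ℝ) :
    ∫ z in (1 : ℝ)..ρ, c / z ^ 2 = c * (1 - ρ⁻¹) := by
  have h0 : (0 : ℝ) ∉ uIcc 1 ρ := by
    rw [mem_uIcc]; rintro (⟨h, -⟩ | ⟨h, -⟩) <;> linarith
  simp only [div_eq_mul_inv c, intervalIntegral.integral_const_mul, ← zpow_natCast, ← zpow_neg,
    Nat.cast_ofNat]
  rw [integral_zpow (Or.inr ⟨by norm_num, h0⟩)]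
  norm_num [div_neg, neg_sub]

lemma Hpot_one (p : ℝ → ℝ) : Hpot p 1 = 0 := by
  simp [Hpot]

lemma hasDerivAt_Hpot_one {p : ℝ → ℝ} (hp : ContinuousOn p (Ioi 0)) :
    HasDerivAt (Hpot p) (p 1) 1 := by
  have hf : ContinuousOn (fun z => p z / z ^ 2) (Ioi 0) :=
    hp.div (continuousOn_pow 2) fun z hz => pow_ne_zero 2 (ne_of_gt hz)
  have hint : HasDerivAt (fun ρ => ∫ z in (1 : ℝ)..ρ, p z / z ^ 2) (p 1 / 1 ^ 2) 1 :=
    intervalIntegral.integral_hasDerivAt_right (by simp)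
      (hf.stronglyMeasurableAtFilter isOpen_Ioi 1 (mem_Ioi.2 one_pos))
      (hf.continuousAt (isOpen_Ioi.mem_nhds (mem_Ioi.2 one_pos)))
  unfold Hpot
  simpa using (hasDerivAt_id' (1 : ℝ)).fun_mul hint

lemma Hpot_sub_mul_sub_one {p : ℝ → ℝ} (hp : ContinuousOn p (Ioi 0)) {ρ : ℝ} (hρ : 0 < ρ) :
    Hpot p ρ - p 1 * (ρ - 1) = ρ * ∫ z in (1 : ℝ)..ρ, (p z - p 1) / z ^ 2 := by
  have hsub : uIcc 1 ρ ⊆ Ioi 0 := fun z hz => lt_of_lt_of_le (lt_min one_pos hρ) hz.1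
  have hconst : ContinuousOn (fun z : ℝ => p 1 / z ^ 2) (uIcc 1 ρ) :=
    continuousOn_const.div (continuousOn_pow 2) fun z hz => pow_ne_zero 2 (ne_of_gt (hsub hz))
  have hpz : IntervalIntegrable (fun z => p z / z ^ 2) MeasureTheory.volume 1 ρ :=
    ((hp.mono hsub).div (continuousOn_pow 2)
      fun z hz => pow_ne_zero 2 (ne_of_gt (hsub hz))).intervalIntegrable
  simp_rw [sub_div]
  rw [intervalIntegral.integral_sub hpz hconst.intervalIntegrable, integral_div_sq hρ, Hpot]
  field_simp

lemma mul_rpow_mul_sub_le_sub_of_le_deriv {p : ℝ → ℝ} {b r x y : ℝ} (hr : 0 ≤ r) (hb : 0 ≤ b)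
    (hx : 0 ≤ x) (hxy : x ≤ y) (hp : DifferentiableOn ℝ p (Icc x y))
    (hderiv : ∀ z ∈ Ioo x y, b * z ^ r ≤ deriv p z) :
    b * x ^ r * (y - x) ≤ p y - p x := by
  refine (convex_Icc x y).mul_sub_le_image_sub_of_le_deriv hp.continuousOn
    (hp.mono interior_subset) (fun z hz => ?_) x (left_mem_Icc.2 hxy) y (right_mem_Icc.2 hxy) hxy
  rw [interior_Icc] at hz
  calc b * x ^ r ≤ b * z ^ r := by gcongr; exact hz.1.le
    _ ≤ deriv p z := hderiv z hz

lemma half_le_mul_integral_div_sq {q : ℝ → ℝ} (hq : MonotoneOn q (Ici 1)) (hq1 : 0 ≤ q 1)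
    {ρ : ℝ} (hρ : 2 ≤ ρ) : q (ρ / 2) / 2 ≤ ρ * ∫ z in (1 : ℝ)..ρ, q z / z ^ 2 := by
  have hint : ∀ a b, 1 ≤ a → a ≤ b →
      IntervalIntegrable (fun z => q z / z ^ 2) MeasureTheory.volume a b := by
    intro a b ha hab
    have hsub : uIcc a b ⊆ Ici 1 := fun z hz => le_trans (le_min ha (ha.trans hab)) hz.1
    exact (hq.mono hsub).intervalIntegrable.mul_continuousOn
      ((continuousOn_pow 2).inv₀ fun z hz => pow_ne_zero 2 (by linarith [mem_Ici.1 (hsub hz)]))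
  have hlow : 0 ≤ ∫ z in (1 : ℝ)..ρ / 2, q z / z ^ 2 :=
    intervalIntegral.integral_nonneg (by linarith) fun z hz =>
      div_nonneg (hq1.trans (hq self_mem_Ici hz.1 hz.1)) (sq_nonneg z)
  have hhigh : ∫ _ in ρ / 2..ρ, q (ρ / 2) / ρ ^ 2 ≤ ∫ z in ρ / 2..ρ, q z / z ^ 2 := by
    refine intervalIntegral.integral_mono_on (by linarith) intervalIntegrable_const
      (hint _ _ (by linarith) (by linarith)) fun z hz => ?_
    have hz1 : (1 : ℝ) ≤ z := by linarith [hz.1]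
    have hqz : q (ρ / 2) ≤ q z := hq (mem_Ici.2 (by linarith)) hz1 hz.1
    have : 0 ≤ q z := hq1.trans (hq self_mem_Ici hz1 hz1)
    gcongr
    exact hz.2
  rw [intervalIntegral.integral_const, smul_eq_mul] at hhigh
  rw [← intervalIntegral.integral_add_adjacent_intervals (b := ρ / 2)
    (hint _ _ le_rfl (by linarith)) (hint _ _ (by linarith) (by linarith))]
  have hρ0 : 0 < ρ := by linarith
  calc q (ρ / 2) / 2 = ρ * ((ρ - ρ / 2) * (q (ρ / 2) / ρ ^ 2)) := by field_simp; ring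
    _ ≤ _ := by gcongr; linarith

lemma eventually_mul_le_of_tendsto_div {α : Type*} {l : Filter α} {f g : α → ℝ} {L c : ℝ}
    (h : Tendsto (fun x => f x / g x) l (nhds L)) (hc : c < L) (hg : ∀ᶠ x in l, 0 < g x) :
    ∀ᶠ x in l, c * g x ≤ f x := by
  filter_upwards [h.eventually (eventually_ge_nhds hc), hg] with x hx hgx
  exact (le_div_iff₀ hgx).1 hx

/-- `γ`-growth of the relative entropy integrand at infinity: if `p′ > 0` on `(0,∞)` and
`p′(ρ)/ρ^{γ−1} → p∞ > 0` as `ρ → ∞` with `γ > 1`, then there exist `c > 0` and `R > 1`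
such that `H(ρ) − H′(1)(ρ − 1) − H(1) ≥ c ρ^γ` for every `ρ ≥ R`. -/
theorem relative_entropy_gamma_growth
    (γ : ℝ) (hγ : 1 < γ)
    (p : ℝ → ℝ) (hp : ContDiffOn ℝ 1 p (Set.Ioi 0))
    (hp' : ∀ ρ : ℝ, 0 < ρ → 0 < deriv p ρ)
    (pinf : ℝ) (hpinf : 0 < pinf)
    (hlim : Tendsto (fun ρ : ℝ => deriv p ρ / ρ ^ (γ - 1)) atTop (nhds pinf)) :
    ∃ c : ℝ, 0 < c ∧ ∃ R : ℝ, 1 < R ∧ ∀ ρ : ℝ, R ≤ ρ →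
      c * ρ ^ γ ≤ Hpot p ρ - deriv (Hpot p) 1 * (ρ - 1) - Hpot p 1 := by
  have hpc : ContinuousOn p (Ioi 0) := hp.continuousOn
  have hmono : MonotoneOn p (Ioi 0) :=
    (strictMonoOn_of_deriv_pos (convex_Ioi 0) hpc fun ρ hρ =>
      hp' ρ (by rwa [interior_Ioi] at hρ)).monotoneOn
  obtain ⟨M, hM⟩ := eventually_atTop.1 <| (eventually_ge_atTop 1).and <|
    eventually_mul_le_of_tendsto_div hlim (half_lt_self hpinf) <|
      (eventually_gt_atTop 0).mono fun ρ hρ => rpow_pos_of_pos hρ _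
  have hM1 : 1 ≤ M := (hM M le_rfl).1
  refine ⟨pinf / 4 / 4 ^ γ, by positivity, 4 * M, by linarith, fun ρ hρ => ?_⟩
  have hρ0 : 0 < ρ := by linarith
  rw [Hpot_one, (hasDerivAt_Hpot_one hpc).deriv, sub_zero, Hpot_sub_mul_sub_one hpc hρ0]
  calc pinf / 4 / 4 ^ γ * ρ ^ γ = pinf / 2 * (ρ / 4) ^ (γ - 1) * (ρ / 2 - ρ / 4) / 2 := by
        rw [rpow_sub_one (by positivity), div_rpow hρ0.le (by norm_num)]
        field_simp
        ring
    _ ≤ (p (ρ / 2) - p (ρ / 4)) / 2 := by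
        gcongr
        exact mul_rpow_mul_sub_le_sub_of_le_deriv (sub_nonneg.2 hγ.le) (by positivity)
          (by positivity) (by linarith)
          ((hp.differentiableOn one_ne_zero).mono fun z hz => mem_Ioi.2 (by linarith [hz.1]))
          fun z hz => (hM z (by linarith [hz.1])).2
    _ ≤ (p (ρ / 2) - p 1) / 2 := by
        gcongr
        exact hmono (mem_Ioi.2 one_pos) (mem_Ioi.2 (by linarith)) (by linarith)
    _ ≤ ρ * ∫ z in (1 : ℝ)..ρ, (p z - p 1) / z ^ 2 :=
        half_le_mul_integral_div_sq (q := fun z => p z - p 1)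
          (fun a ha b hb hab =>
            sub_le_sub_right (hmono.mono (Ici_subset_Ioi.2 one_pos) ha hb hab) _)
          (by simp) (by linarith)
end
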